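/- arXiv:2305.06112 — 6 statements merged into one kernel-verified Lean document; each statement's English description precedes it below -/
import Mathlib

section
/- In a Markov category C, Bayesian inverses are almost-surely unique: if g : Y → X and g' : Y → X are both Bayesian inverses of f : X → Y at the state p : I → X, then g and g' are (f ∘ p)-almost-surely equal, i.e. g ≐_{f∘p} g'. -/
open CategoryTheory MonoidalCategory

universe v u

/-- A Markov category: a symmetric monoidal category equipped with a commutative
comonoid structure (copy, discard) on every object, compatible with the monoidal
structure, with discarding natural. -/
class MarkovCategory (C : Type u) [Category.{v} C] [MonoidalCategory C]
    [SymmetricCategory C] where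
  copy : ∀ X : C, X ⟶ X ⊗ X
  del : ∀ X : C, X ⟶ 𝟙_ C
  copy_del_left : ∀ X : C, copy X ≫ (del X ▷ X) = (λ_ X).inv
  copy_del_right : ∀ X : C, copy X ≫ (X ◁ del X) = (ρ_ X).inv
  copy_assoc : ∀ X : C, copy X ≫ (copy X ▷ X) ≫ (α_ X X X).hom = copy X ≫ (X ◁ copy X)
  copy_comm : ∀ X : C, copy X ≫ (β_ X X).hom = copy X
  copy_tensor : ∀ X Y : C, copy (X ⊗ Y) = (copy X ⊗ₘ copy Y) ≫ tensorμ X X Y Y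
  copy_unit : copy (𝟙_ C) = (λ_ (𝟙_ C)).inv
  del_unit : del (𝟙_ C) = 𝟙 (𝟙_ C)
  del_natural : ∀ {X Y : C} (f : X ⟶ Y), f ≫ del Y = del X

namespace MarkovCategory

variable {C : Type u} [Category.{v} C] [MonoidalCategory C] [SymmetricCategory C]
  [_root_.MarkovCategory C]

/-- `f` and `g` are `p`-almost-surely equal: `(id_X ⊗ f) ∘ ∇_X ∘ p = (id_X ⊗ g) ∘ ∇_X ∘ p`. -/
def AEEq {X Y : C} (p : 𝟙_ C ⟶ X) (f g : X ⟶ Y) : Prop :=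
  p ≫ copy X ≫ (X ◁ f) = p ≫ copy X ≫ (X ◁ g)

/-- `f'` is a Bayesian inverse of `f : X ⟶ Y` at the state `p : I ⟶ X`:
`(f' ⊗ id_Y) ∘ ∇_Y ∘ f ∘ p = (id_X ⊗ f) ∘ ∇_X ∘ p`. -/
def BayesianInverse {X Y : C} (f : X ⟶ Y) (p : 𝟙_ C ⟶ X) (f' : Y ⟶ X) : Prop :=
  p ≫ f ≫ copy Y ≫ (f' ▷ Y) = p ≫ copy X ≫ (X ◁ f)

/-- `(Xp, i, r)` is a support of the state `p : I ⟶ X`. -/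
def IsSupport {X : C} (p : 𝟙_ C ⟶ X) (Xp : C) (i : Xp ⟶ X) (r : X ⟶ Xp) : Prop :=
  i ≫ r = 𝟙 Xp ∧ ∀ (Y : C) (f g : X ⟶ Y), AEEq p f g ↔ i ≫ f = i ≫ g

theorem copy_whiskerLeft {X Y : C} (h : Y ⟶ X) :
    copy Y ≫ (Y ◁ h) = copy Y ≫ (h ▷ Y) ≫ (β_ X Y).hom := by
  rw [BraidedCategory.braiding_naturality_left, reassoc_of% copy_comm]

theorem aeEq_iff_whiskerRight {X Y : C} (p : 𝟙_ C ⟶ X) (f g : X ⟶ Y) :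
    AEEq p f g ↔ p ≫ copy X ≫ (f ▷ X) = p ≫ copy X ≫ (g ▷ X) := by
  rw [AEEq, copy_whiskerLeft, copy_whiskerLeft]
  simp only [← Category.assoc]
  exact cancel_mono _

end MarkovCategory

open MarkovCategory in
/-- Bayesian inverses are almost-surely unique. -/
theorem bayesianInverse_aeEq_unique {C : Type u} [Category.{v} C] [MonoidalCategory C]
    [SymmetricCategory C] [_root_.MarkovCategory C] {X Y : C} (f : X ⟶ Y) (p : 𝟙_ C ⟶ X)
    (g g' : Y ⟶ X) (hg : BayesianInverse f p g) (hg' : BayesianInverse f p g') :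
    AEEq (p ≫ f) g g' := by
  rw [aeEq_iff_whiskerRight]
  simpa using hg.trans hg'.symm
end

section
/- Chain rule for Bayesian updating: in a Markov category C, let f : X → Y and g : Y → Z be morphisms and p : I → X a state. If f' : Y → X is a Bayesian inverse of f at p, and g' : Z → Y is a Bayesian inverse of g at the pushforward state f ∘ p, then the composite f' ∘ g' : Z → X is a Bayesian inverse of g ∘ f at p. -/
open CategoryTheory MonoidalCategory

universe v u

namespace MarkovCategory

variable {C : Type u} [Category.{v} C] [MonoidalCategory C] [SymmetricCategory C]
  [_root_.MarkovCategory C]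

theorem BayesianInverse.comp_whiskerRight_joint {Y Z W : C} {g : Y ⟶ Z} {q : 𝟙_ C ⟶ Y}
    {g' : Z ⟶ Y} (hg : BayesianInverse g q g') (h : Y ⟶ W) :
    q ≫ g ≫ copy Z ≫ ((g' ≫ h) ▷ Z) = q ≫ copy Y ≫ (h ▷ Y) ≫ (W ◁ g) :=
  calc q ≫ g ≫ copy Z ≫ ((g' ≫ h) ▷ Z)
      = (q ≫ g ≫ copy Z ≫ (g' ▷ Z)) ≫ (h ▷ Z) := by
        simp only [comp_whiskerRight, Category.assoc]
    _ = (q ≫ copy Y ≫ (Y ◁ g)) ≫ (h ▷ Z) := by rw [hg]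
    _ = q ≫ copy Y ≫ (h ▷ Y) ≫ (W ◁ g) := by simp [whisker_exchange]

theorem BayesianInverse.whiskerLeft_joint {X Y Z : C} {f : X ⟶ Y} {p : 𝟙_ C ⟶ X}
    {f' : Y ⟶ X} (hf : BayesianInverse f p f') (g : Y ⟶ Z) :
    p ≫ f ≫ copy Y ≫ (f' ▷ Y) ≫ (X ◁ g) = p ≫ copy X ≫ (X ◁ (f ≫ g)) := by
  simpa only [Category.assoc, whiskerLeft_comp] using congrArg (· ≫ (X ◁ g)) hf

end MarkovCategory

open MarkovCategory in
/-- Chain rule for Bayesian updating. -/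
theorem bayesianInverse_comp {C : Type u} [Category.{v} C] [MonoidalCategory C]
    [SymmetricCategory C] [_root_.MarkovCategory C] {X Y Z : C} (f : X ⟶ Y) (g : Y ⟶ Z)
    (p : 𝟙_ C ⟶ X) (f' : Y ⟶ X) (g' : Z ⟶ Y)
    (hf : BayesianInverse f p f') (hg : BayesianInverse g (p ≫ f) g') :
    BayesianInverse (f ≫ g) p (g' ≫ f') :=
  calc p ≫ (f ≫ g) ≫ copy Z ≫ ((g' ≫ f') ▷ Z)
      = (p ≫ f) ≫ g ≫ copy Z ≫ ((g' ≫ f') ▷ Z) := by simp only [Category.assoc]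
    _ = (p ≫ f) ≫ copy Y ≫ (f' ▷ Y) ≫ (X ◁ g) := hg.comp_whiskerRight_joint f'
    _ = p ≫ copy X ≫ (X ◁ (f ≫ g)) := by
        simpa only [Category.assoc] using hf.whiskerLeft_joint g
end

section
/- Bayesian inversion is almost-surely functorial: in a Markov category C, let f : X → Y and g : Y → Z be morphisms and p : I → X a state. If f' : Y → X is a Bayesian inverse of f at p, g' : Z → Y is a Bayesian inverse of g at f ∘ p, and h : Z → X is any Bayesian inverse of g ∘ f at p, then h ≐_{g∘f∘p} f' ∘ g'. -/
/-!
Composing Bayesian inverses gives a Bayesian inverse of the composite (whisker exchange moves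
`g` past `f'`), and any two Bayesian inverses of `f` at `p` agree `f ∘ p`-almost surely, since
by symmetry of copying their defining equations pin down the same joint state.
-/

open CategoryTheory MonoidalCategory

universe v u

namespace MarkovCategory

variable {C : Type u} [Category.{v} C] [MonoidalCategory C] [SymmetricCategory C]
  [_root_.MarkovCategory C]

theorem copy_whiskerLeft_eq {X W : C} (k : X ⟶ W) :
    copy X ≫ (X ◁ k) = copy X ≫ (k ▷ X) ≫ (β_ W X).hom := by
  conv_lhs => rw [← copy_comm X]
  rw [Category.assoc, ← BraidedCategory.braiding_naturality_left]

theorem BayesianInverse.aeEq {X Y : C} {f : X ⟶ Y} {p : 𝟙_ C ⟶ X} {f' f'' : Y ⟶ X}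
    (hf' : BayesianInverse f p f') (hf'' : BayesianInverse f p f'') : AEEq (p ≫ f) f' f'' := by
  rw [aeEq_iff_whiskerRight]
  simpa only [Category.assoc] using hf'.trans hf''.symm

theorem BayesianInverse.comp {X Y Z : C} {f : X ⟶ Y} {g : Y ⟶ Z} {p : 𝟙_ C ⟶ X}
    {f' : Y ⟶ X} {g' : Z ⟶ Y} (hf : BayesianInverse f p f')
    (hg : BayesianInverse g (p ≫ f) g') : BayesianInverse (f ≫ g) p (g' ≫ f') := by
  unfold BayesianInverse at *
  simp only [Category.assoc] at hg
  calc p ≫ (f ≫ g) ≫ copy Z ≫ ((g' ≫ f') ▷ Z)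
      = p ≫ f ≫ g ≫ copy Z ≫ (g' ▷ Z) ≫ (f' ▷ Z) := by simp
    _ = p ≫ f ≫ copy Y ≫ (f' ▷ Y) ≫ (X ◁ g) := by
        rw [reassoc_of% hg, whisker_exchange]
    _ = p ≫ copy X ≫ (X ◁ (f ≫ g)) := by
        rw [reassoc_of% hf, whiskerLeft_comp]

end MarkovCategory

open _root_.MarkovCategory in
/-- Bayesian inversion is almost-surely functorial. -/
theorem bayesianInverse_almost_functorial {C : Type u} [Category.{v} C] [MonoidalCategory C]
    [SymmetricCategory C] [_root_.MarkovCategory C] {X Y Z : C} (f : X ⟶ Y) (g : Y ⟶ Z)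
    (p : 𝟙_ C ⟶ X) (f' : Y ⟶ X) (g' : Z ⟶ Y) (h : Z ⟶ X)
    (hf : BayesianInverse f p f') (hg : BayesianInverse g (p ≫ f) g')
    (hh : BayesianInverse (f ≫ g) p h) :
    AEEq (p ≫ f ≫ g) h (g' ≫ f') :=
  hh.aeEq (hf.comp hg)
end

section
/- In a Markov category C, let p : I → X be a state and suppose an object X_p represents the functor C → Set sending Y to the quotient C(X, Y)/≐_p of the hom-set by p-almost-sure equality (with functorial action induced by postcomposition). Then there exist morphisms i : X_p → X and r : X → X_p such that r ∘ i = id_{X_p} and, for all objects Y and all f, g : X → Y, f ≐_p g if and only if f ∘ i = g ∘ i. -/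
open CategoryTheory MonoidalCategory

universe v u

namespace MarkovCategory

variable {C : Type u} [Category.{v} C] [MonoidalCategory C] [SymmetricCategory C]
  [_root_.MarkovCategory C]

theorem AEEq.postcomp {X Y Z : C} {p : 𝟙_ C ⟶ X} {f g : X ⟶ Y} (hfg : AEEq p f g)
    (k : Y ⟶ Z) : AEEq p (f ≫ k) (g ≫ k) := by
  have := congrArg (fun m => m ≫ (X ◁ k)) hfg
  simpa [AEEq, MonoidalCategory.whiskerLeft_comp] using this

/-- The functor `Y ↦ C(X, Y)/≐ₚ` sending an object to the quotient of the hom-set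
by `p`-almost-sure equality, with functorial action induced by postcomposition. -/
def aeQuotFunctor {X : C} (p : 𝟙_ C ⟶ X) : C ⥤ Type v where
  obj Y := Quot (fun f g : X ⟶ Y => AEEq p f g)
  map {Y Z} k := TypeCat.ofHom (Quot.map (fun f => f ≫ k) (fun f g hfg => hfg.postcomp k))
  map_id Y := by
    ext q
    induction q using Quot.ind with
    | _ f => simp [Quot.map]
  map_comp {Y Z W} k l := by
    ext q
    induction q using Quot.ind with
    | _ f => simp [Quot.map]

end MarkovCategory

/-!
By the Yoneda lemma a representation `C(Xp, -) ≅ C(X, -)/≐ₚ` is determined by the map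
`i : Xp ⟶ X` corresponding to the class of `𝟙 X`, and naturality sends the class of `f` to
`i ≫ f`. Injectivity of the representation then says `f ≐ₚ g ↔ i ≫ f = i ≫ g`, and any
representative `r` of the class corresponding to `𝟙 Xp` satisfies `i ≫ r = 𝟙 Xp`.
-/

namespace MarkovCategory

variable {C : Type u} [Category.{v} C] [MonoidalCategory C] [SymmetricCategory C]
  [_root_.MarkovCategory C]

theorem AEEq.equivalence {X Y : C} (p : 𝟙_ C ⟶ X) : Equivalence (AEEq (Y := Y) p) :=
  ⟨fun _ => rfl, Eq.symm, Eq.trans⟩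

def aeClass {X Y : C} (p : 𝟙_ C ⟶ X) (f : X ⟶ Y) : (aeQuotFunctor p).obj Y :=
  Quot.mk _ f

theorem aeClass_eq_iff {X Y : C} {p : 𝟙_ C ⟶ X} {f g : X ⟶ Y} :
    aeClass p f = aeClass p g ↔ AEEq p f g :=
  (AEEq.equivalence p).quot_mk_eq_iff f g

theorem aeClass_surjective {X Y : C} (p : 𝟙_ C ⟶ X) : Function.Surjective (aeClass (Y := Y) p) :=
  Quot.exists_rep

theorem aeQuotFunctor_map_aeClass {X Y Z : C} (p : 𝟙_ C ⟶ X) (f : X ⟶ Y) (k : Y ⟶ Z) :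
    (aeQuotFunctor p).map k (aeClass p f) = aeClass p (f ≫ k) :=
  rfl

section Corepresentation

variable {X Xp : C} {p : 𝟙_ C ⟶ X} (R : (aeQuotFunctor p).CorepresentableBy Xp)

def supportInclusion : Xp ⟶ X :=
  R.homEquiv.symm (aeClass p (𝟙 X))

noncomputable def supportRetraction : X ⟶ Xp :=
  Function.surjInv (aeClass_surjective p) (R.homEquiv (𝟙 Xp))

theorem homEquiv_symm_aeClass {Y : C} (f : X ⟶ Y) :
    R.homEquiv.symm (aeClass p f) = supportInclusion R ≫ f := by
  rw [supportInclusion, R.homEquiv_symm_comp, aeQuotFunctor_map_aeClass, Category.id_comp]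

theorem isSupport_of_corepresentableBy :
    IsSupport p Xp (supportInclusion R) (supportRetraction R) := by
  refine ⟨?_, fun Y f g => ?_⟩
  · rw [← homEquiv_symm_aeClass, supportRetraction, Function.surjInv_eq (aeClass_surjective p),
      Equiv.symm_apply_apply]
  · rw [← homEquiv_symm_aeClass, ← homEquiv_symm_aeClass, R.homEquiv.symm.injective.eq_iff,
      aeClass_eq_iff]

end Corepresentation

end MarkovCategory

open MarkovCategory in
/-- A representing object of the quotient functor `Y ↦ C(X, Y)/≐ₚ` admits a
section-retraction pair exhibiting it as a support of `p`. -/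
theorem support_of_representation {C : Type u} [Category.{v} C] [MonoidalCategory C]
    [SymmetricCategory C] [_root_.MarkovCategory C] {X : C} (p : 𝟙_ C ⟶ X) (Xp : C)
    (e : coyoneda.obj (Opposite.op Xp) ≅ aeQuotFunctor p) :
    ∃ (i : Xp ⟶ X) (r : X ⟶ Xp), IsSupport p Xp i r :=
  ⟨_, _, isSupport_of_corepresentableBy (Functor.corepresentableByEquiv.symm e)⟩
end

section
/- Support objects are unique up to isomorphism: in a Markov category C, if (X_p, i, r) and (X'_p, i', r') are both supports of the same state p : I → X, then r' ∘ i : X_p → X'_p and r ∘ i' : X'_p → X_p are mutually inverse isomorphisms. -/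
open CategoryTheory MonoidalCategory

universe v u

/-- A Markov category: a symmetric monoidal category equipped with a commutative
comonoid structure (copy, discard) on every object, compatible with the monoidal
structure, with discarding natural. -/
class MarkovCategory' (C : Type u) [Category.{v} C] [MonoidalCategory C]
    [SymmetricCategory C] where
  copy : ∀ X : C, X ⟶ X ⊗ X
  del : ∀ X : C, X ⟶ 𝟙_ C
  copy_del_left : ∀ X : C, copy X ≫ (del X ▷ X) = (λ_ X).inv
  copy_del_right : ∀ X : C, copy X ≫ (X ◁ del X) = (ρ_ X).inv
  copy_assoc : ∀ X : C, copy X ≫ (copy X ▷ X) ≫ (α_ X X X).hom = copy X ≫ (X ◁ copy X)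
  copy_comm : ∀ X : C, copy X ≫ (β_ X X).hom = copy X
  copy_tensor : ∀ X Y : C, copy (X ⊗ Y) = (copy X ⊗ₘ copy Y) ≫ tensorμ X X Y Y
  copy_unit : copy (𝟙_ C) = (λ_ (𝟙_ C)).inv
  del_unit : del (𝟙_ C) = 𝟙 (𝟙_ C)
  del_natural : ∀ {X Y : C} (f : X ⟶ Y), f ≫ del Y = del X

namespace MarkovCategory'

variable {C : Type u} [Category.{v} C] [MonoidalCategory C] [SymmetricCategory C]
  [MarkovCategory' C]

/-- `f` and `g` are `p`-almost-surely equal: `(id_X ⊗ f) ∘ ∇_X ∘ p = (id_X ⊗ g) ∘ ∇_X ∘ p`. -/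
def AEEq {X Y : C} (p : 𝟙_ C ⟶ X) (f g : X ⟶ Y) : Prop :=
  p ≫ copy X ≫ (X ◁ f) = p ≫ copy X ≫ (X ◁ g)

/-- `f'` is a Bayesian inverse of `f : X ⟶ Y` at the state `p : I ⟶ X`:
`(f' ⊗ id_Y) ∘ ∇_Y ∘ f ∘ p = (id_X ⊗ f) ∘ ∇_X ∘ p`. -/
def BayesianInverse {X Y : C} (f : X ⟶ Y) (p : 𝟙_ C ⟶ X) (f' : Y ⟶ X) : Prop :=
  p ≫ f ≫ copy Y ≫ (f' ▷ Y) = p ≫ copy X ≫ (X ◁ f)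

/-- `(Xp, i, r)` is a support of the state `p : I ⟶ X`. -/
def IsSupport {X : C} (p : 𝟙_ C ⟶ X) (Xp : C) (i : Xp ⟶ X) (r : X ⟶ Xp) : Prop :=
  i ≫ r = 𝟙 Xp ∧ ∀ (Y : C) (f g : X ⟶ Y), AEEq p f g ↔ i ≫ f = i ≫ g

end MarkovCategory'

namespace MarkovCategory'

variable {C : Type u} [Category.{v} C] [MonoidalCategory C] [SymmetricCategory C]
  [MarkovCategory' C] {X : C} {p : 𝟙_ C ⟶ X} {Xp Xp' : C} {i : Xp ⟶ X} {r : X ⟶ Xp}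
  {i' : Xp' ⟶ X} {r' : X ⟶ Xp'}

theorem IsSupport.aeEq_id_retraction_comp_inclusion (h : IsSupport p Xp i r) :
    AEEq p (𝟙 X) (r ≫ i) :=
  (h.2 X _ _).mpr (by rw [reassoc_of% h.1, Category.comp_id])

theorem IsSupport.inclusion_comp_retraction_comp_inclusion (h : IsSupport p Xp i r)
    (h' : IsSupport p Xp' i' r') : i' ≫ r ≫ i = i' :=
  ((h'.2 X _ _).mp h.aeEq_id_retraction_comp_inclusion).symm.trans (Category.comp_id i')

theorem IsSupport.comparison_comp_comparison (h : IsSupport p Xp i r)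
    (h' : IsSupport p Xp' i' r') : (i ≫ r') ≫ (i' ≫ r) = 𝟙 Xp :=
  calc (i ≫ r') ≫ (i' ≫ r) = (i ≫ r' ≫ i') ≫ r := by simp only [Category.assoc]
    _ = i ≫ r := by rw [h'.inclusion_comp_retraction_comp_inclusion h]
    _ = 𝟙 Xp := h.1

end MarkovCategory'

open MarkovCategory' in
/-- Support objects are unique up to isomorphism. -/
theorem support_unique_up_to_iso {C : Type u} [Category.{v} C] [MonoidalCategory C]
    [SymmetricCategory C] [MarkovCategory' C] {X : C} (p : 𝟙_ C ⟶ X)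
    (Xp : C) (i : Xp ⟶ X) (r : X ⟶ Xp) (h : IsSupport p Xp i r)
    (Xp' : C) (i' : Xp' ⟶ X) (r' : X ⟶ Xp') (h' : IsSupport p Xp' i' r') :
    (i ≫ r') ≫ (i' ≫ r) = 𝟙 Xp ∧ (i' ≫ r) ≫ (i ≫ r') = 𝟙 Xp' :=
  ⟨h.comparison_comp_comparison h', h'.comparison_comp_comparison h⟩
end

section
/- Restricting an ordinary Bayesian inverse yields a Bayesian inverse with support: in a Markov category C, fix f : X → Y and a state p : I → X, with supports (X_p, i_X, r_X) of p and (Y_{f∘p}, i_Y, r_Y) of f ∘ p. If h : Y → X is a Bayesian inverse of f at p, then i_X ∘ (r_X ∘ h ∘ i_Y) ∘ r_Y : Y → X is again a Bayesian inverse of f at p; that is, r_X ∘ h ∘ i_Y : Y_{f∘p} → X_p is a Bayesian inverse with support of f at p. -/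
open CategoryTheory MonoidalCategory

universe v u

namespace MarkovCategory

variable {C : Type u} [Category.{v} C] [MonoidalCategory C] [SymmetricCategory C]
  [_root_.MarkovCategory C]

/-!
`rY ≫ iY` is `(p ≫ f)`-almost surely the identity and `rX ≫ iX` is `p`-almost surely the
identity. The Bayesian-inverse equation only sees its inverse `(p ≫ f)`-almost surely, and
postcomposing the inverse with a `p`-almost-sure identity only touches the `X`-marginal `p`.
-/

theorem AEEq.copy_whiskerRight {Z W : C} {s : 𝟙_ C ⟶ Z} {a b : Z ⟶ W} (hab : AEEq s a b) :
    s ≫ copy Z ≫ (a ▷ Z) = s ≫ copy Z ≫ (b ▷ Z) := by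
  have swap : ∀ c : Z ⟶ W, copy Z ≫ (c ▷ Z) = copy Z ≫ (Z ◁ c) ≫ (β_ Z W).hom := fun c => by
    rw [BraidedCategory.braiding_naturality_right, ← Category.assoc, copy_comm]
  have hab' : s ≫ copy Z ≫ (Z ◁ a) = s ≫ copy Z ≫ (Z ◁ b) := hab
  rw [swap, swap, reassoc_of% hab']

theorem IsSupport.aeEq_comp_retraction {Z : C} {q : 𝟙_ C ⟶ Z} {Zq : C} {i : Zq ⟶ Z}
    {r : Z ⟶ Zq} (hq : IsSupport q Zq i r) {W : C} (k : Z ⟶ W) :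
    AEEq q (r ≫ i ≫ k) k := by
  rw [hq.2]
  simp [reassoc_of% hq.1]

theorem BayesianInverse.of_aeEq {X Y : C} {f : X ⟶ Y} {p : 𝟙_ C ⟶ X} {h h' : Y ⟶ X}
    (hh : BayesianInverse f p h) (hae : AEEq (p ≫ f) h' h) : BayesianInverse f p h' := by
  have := hae.copy_whiskerRight
  simp only [Category.assoc] at this
  rw [BayesianInverse, this]
  exact hh

theorem BayesianInverse.comp_of_aeEq_id {X Y : C} {f : X ⟶ Y} {p : 𝟙_ C ⟶ X} {h : Y ⟶ X}
    (hh : BayesianInverse f p h) {g : X ⟶ X} (hg : AEEq p g (𝟙 X)) :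
    BayesianInverse f p (h ≫ g) := by
  have hgr : p ≫ copy X ≫ (g ▷ X) = p ≫ copy X := by
    simpa using hg.copy_whiskerRight
  calc p ≫ f ≫ copy Y ≫ ((h ≫ g) ▷ Y)
      = (p ≫ f ≫ copy Y ≫ (h ▷ Y)) ≫ (g ▷ Y) := by simp
    _ = p ≫ copy X ≫ (g ▷ X) ≫ (X ◁ f) := by
        rw [show p ≫ f ≫ copy Y ≫ h ▷ Y = _ from hh, Category.assoc, Category.assoc,
          whisker_exchange]
    _ = p ≫ copy X ≫ (X ◁ f) := by rw [reassoc_of% hgr]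

end MarkovCategory

open MarkovCategory in
/-- Restricting an ordinary Bayesian inverse yields a Bayesian inverse with support. -/
theorem restrict_bayesianInverse {C : Type u} [Category.{v} C] [MonoidalCategory C]
    [SymmetricCategory C] [_root_.MarkovCategory C] {X Y : C} (f : X ⟶ Y) (p : 𝟙_ C ⟶ X)
    (Xp : C) (iX : Xp ⟶ X) (rX : X ⟶ Xp) (hXp : IsSupport p Xp iX rX)
    (Yfp : C) (iY : Yfp ⟶ Y) (rY : Y ⟶ Yfp) (hYfp : IsSupport (p ≫ f) Yfp iY rY)
    (h : Y ⟶ X) (hh : BayesianInverse f p h) :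
    BayesianInverse f p (rY ≫ (iY ≫ h ≫ rX) ≫ iX) := by
  have hX : BayesianInverse f p (h ≫ rX ≫ iX) :=
    hh.comp_of_aeEq_id (by simpa using hXp.aeEq_comp_retraction (𝟙 X))
  exact hX.of_aeEq (by simpa using hYfp.aeEq_comp_retraction (h ≫ rX ≫ iX))
end
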